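/- Let 1/2 < H < 1 and T > 0. Then the iterated integral over the simplex {0 ≤ u₁ ≤ v₁ ≤ u₂ ≤ v₂ ≤ T} of 4(H(2H−1))² (v₁−u₁)^{2H−2}(v₂−u₂)^{2H−2} [ 2(T−u₂)(T−v₂) + (T−v₁)(T−v₂) ] dv₂ du₂ dv₁ du₁ equals ((6H+4)/(2H+1)) · ℬ(2H+1, 2H+2) · T^{4H+2}. -/

import Mathlib

/-- The Beta function `ℬ(x,y) = ∫₀¹ t^(x-1) (1-t)^(y-1) dt`. -/
noncomputable def betaFn (x y : ℝ) : ℝ :=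
  ∫ t in (0 : ℝ)..1, t ^ (x - 1) * (1 - t) ^ (y - 1)

/-!
Integrate out `v₂, u₂, v₁, u₁` in turn. Each step is either a Beta integral
`∫_c^d (x-c)^a (d-x)^b dx = (d-c)^(a+b+1) ℬ(a+1, b+1)` or an elementary power integral, so with
`a = 2H-2` the integral is `T^(4H+2)/(4H+2)` times `ℬ(2H-1, 2) ℬ(2H-1, 2H+3)` and a rational
function of `H`. Writing `ℬ(x, y) = Γ(x)Γ(y)/Γ(x+y)` and using `Γ(s+1) = sΓ(s)`, both Beta values
reduce to `ℬ(2H+1, 2H+2)`.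
-/

open Real Set intervalIntegral ProbabilityTheory

theorem Gamma_add_two {x : ℝ} (hx : 0 < x) : Gamma (x + 2) = (x + 1) * x * Gamma x := by
  rw [show x + 2 = x + 1 + 1 by ring, Gamma_add_one (by positivity), Gamma_add_one hx.ne']
  ring

theorem beta_two {x : ℝ} (hx : 0 < x) : beta x 2 = 1 / (x * (x + 1)) := by
  rw [beta, Gamma_add_two hx, Gamma_two]
  field_simp [(Gamma_pos_of_pos hx).ne']

theorem beta_add_two {x y : ℝ} (hx : 0 < x) (hy : 0 < y) :
    beta x (y + 2) = (y + 1) * (x + y + 2) / (x * (x + 1)) * beta (x + 2) (y + 1) := by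
  have hΓy : Gamma (y + 2) = (y + 1) * Gamma (y + 1) := by
    rw [show y + 2 = y + 1 + 1 by ring, Gamma_add_one (by positivity)]
  have hΓxy : Gamma (x + 2 + (y + 1)) = (x + y + 2) * Gamma (x + (y + 2)) := by
    rw [show x + 2 + (y + 1) = x + (y + 2) + 1 by ring, Gamma_add_one (by positivity)]
    ring
  have hΓx := (Gamma_pos_of_pos hx).ne'
  have hΓxy' := (Gamma_pos_of_pos (show 0 < x + (y + 2) by positivity)).ne'
  rw [beta, beta, Gamma_add_two hx, hΓy, hΓxy]
  field_simp

theorem betaFn_eq_beta {x y : ℝ} (hx : 0 < x) (hy : 0 < y) : betaFn x y = beta x y := by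
  suffices Complex.betaIntegral x y = betaFn x y by
    rw [beta_eq_betaIntegralReal x y hx hy, this, Complex.ofReal_re]
  rw [betaFn, ← intervalIntegral.integral_ofReal, Complex.betaIntegral]
  refine integral_congr fun t ht => ?_
  rw [uIcc_of_le zero_le_one] at ht
  push_cast [Complex.ofReal_cpow ht.1, Complex.ofReal_cpow (sub_nonneg.2 ht.2)]
  rfl

theorem integral_sub_rpow_mul_sub_rpow {a b c d : ℝ} (hcd : c ≤ d) (hab : a + b + 1 ≠ 0) :
    ∫ x in c..d, (x - c) ^ a * (d - x) ^ b = (d - c) ^ (a + b + 1) * betaFn (a + 1) (b + 1) := by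
  rcases hcd.eq_or_lt with rfl | hcd
  · simp [zero_rpow hab]
  have hL : 0 < d - c := sub_pos.2 hcd
  have hsub :=
    integral_comp_add_mul (a := 0) (b := 1) (fun x => (x - c) ^ a * (d - x) ^ b) hL.ne' c
  have hscale : ∫ t in (0:ℝ)..1, (c + (d - c) * t - c) ^ a * (d - (c + (d - c) * t)) ^ b
      = (d - c) ^ (a + b) * betaFn (a + 1) (b + 1) := by
    rw [betaFn, ← integral_const_mul]
    refine integral_congr fun t ht => ?_
    rw [uIcc_of_le zero_le_one] at ht
    simp only [add_sub_cancel_right]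
    rw [add_sub_cancel_left, show d - (c + (d - c) * t) = (d - c) * (1 - t) by ring,
      mul_rpow hL.le ht.1, mul_rpow hL.le (sub_nonneg.2 ht.2), rpow_add hL]
    ring
  simp only [mul_zero, add_zero, mul_one, add_sub_cancel, smul_eq_mul, hscale] at hsub
  rw [rpow_add hL, rpow_one, mul_right_comm, hsub]
  field_simp

theorem integral_sub_rpow {p : ℝ} (hp : -1 < p) (c d : ℝ) :
    ∫ x in c..d, (d - x) ^ p = (d - c) ^ (p + 1) / (p + 1) := by
  rw [integral_comp_sub_left (fun y => y ^ p) d, sub_self, integral_rpow (Or.inl hp),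
    zero_rpow (by linarith), sub_zero]

theorem intervalIntegrable_sub_rpow {p : ℝ} (hp : -1 < p) (c d : ℝ) :
    IntervalIntegrable (fun x => (d - x) ^ p) MeasureTheory.volume c d := by
  simpa using (intervalIntegrable_rpow' hp (a := d - c) (b := 0)).comp_sub_left d

theorem integral_affine_mul_sub_rpow {p c d : ℝ} (hp : -1 < p) (hcd : c ≤ d) :
    ∫ x in c..d, (2 * (d - x) + (d - c)) * (d - x) ^ p
      = (2 / (p + 2) + 1 / (p + 1)) * (d - c) ^ (p + 2) := by
  have hsplit : EqOn (fun x => (2 * (d - x) + (d - c)) * (d - x) ^ p)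
      (fun x => 2 * (d - x) ^ (p + 1) + (d - c) * (d - x) ^ p) (uIcc c d) := by
    intro x hx
    rw [uIcc_of_le hcd] at hx
    simp only
    rw [rpow_add_one' (sub_nonneg.2 hx.2) (by linarith)]
    ring
  have hpow : (d - c) ^ (p + 2) = (d - c) * (d - c) ^ (p + 1) := by
    rw [← rpow_one_add' (sub_nonneg.2 hcd) (by linarith)]
    ring_nf
  rw [integral_congr hsplit,
    integral_add ((intervalIntegrable_sub_rpow (by linarith) c d).const_mul 2)
      ((intervalIntegrable_sub_rpow hp c d).const_mul _), integral_const_mul, integral_const_mul,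
    integral_sub_rpow (by linarith), integral_sub_rpow hp, show p + 1 + 1 = p + 2 by ring, hpow]
  field_simp

noncomputable def simplexIntegrand (k a T u₁ v₁ u₂ v₂ : ℝ) : ℝ :=
  k * (v₁ - u₁) ^ a * (v₂ - u₂) ^ a * (2 * (T - u₂) * (T - v₂) + (T - v₁) * (T - v₂))

section simplexIntegrand

variable {k a T : ℝ}

theorem integral_simplexIntegrand_v₂ (ha : -1 < a) {u₁ v₁ u₂ : ℝ} (hu₂ : u₂ ≤ T) :
    ∫ v₂ in u₂..T, simplexIntegrand k a T u₁ v₁ u₂ v₂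
      = k * betaFn (a + 1) 2 * (v₁ - u₁) ^ a
        * ((2 * (T - u₂) + (T - v₁)) * (T - u₂) ^ (a + 2)) := by
  have hfactor : ∀ v₂, simplexIntegrand k a T u₁ v₁ u₂ v₂
      = k * (v₁ - u₁) ^ a * (2 * (T - u₂) + (T - v₁)) * ((v₂ - u₂) ^ a * (T - v₂) ^ (1 : ℝ)) := by
    intro v₂
    rw [simplexIntegrand, rpow_one]
    ring
  simp_rw [hfactor]
  rw [integral_const_mul, integral_sub_rpow_mul_sub_rpow hu₂ (by linarith)]
  ring_nf

theorem integral_simplexIntegrand_u₂ (ha : -1 < a) {u₁ v₁ : ℝ} (hv₁ : v₁ ≤ T) :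
    ∫ u₂ in v₁..T, ∫ v₂ in u₂..T, simplexIntegrand k a T u₁ v₁ u₂ v₂
      = k * betaFn (a + 1) 2 * (2 / (a + 4) + 1 / (a + 3))
        * ((v₁ - u₁) ^ a * (T - v₁) ^ (a + 4)) := by
  rw [integral_congr fun u₂ hu₂ => integral_simplexIntegrand_v₂ ha ((uIcc_of_le hv₁ ▸ hu₂).2),
    integral_const_mul, integral_affine_mul_sub_rpow (by linarith) hv₁]
  ring_nf

theorem integral_simplexIntegrand_v₁ (ha : -1 < a) {u₁ : ℝ} (hu₁ : u₁ ≤ T) :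
    ∫ v₁ in u₁..T, ∫ u₂ in v₁..T, ∫ v₂ in u₂..T, simplexIntegrand k a T u₁ v₁ u₂ v₂
      = k * betaFn (a + 1) 2 * (2 / (a + 4) + 1 / (a + 3)) * betaFn (a + 1) (a + 5)
        * (T - u₁) ^ (2 * a + 5) := by
  rw [integral_congr fun v₁ hv₁ => integral_simplexIntegrand_u₂ ha ((uIcc_of_le hu₁ ▸ hv₁).2),
    integral_const_mul, integral_sub_rpow_mul_sub_rpow hu₁ (by linarith)]
  ring_nf

theorem integral_simplexIntegrand (ha : -1 < a) (hT : 0 ≤ T) :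
    ∫ u₁ in (0 : ℝ)..T, ∫ v₁ in u₁..T, ∫ u₂ in v₁..T, ∫ v₂ in u₂..T,
        simplexIntegrand k a T u₁ v₁ u₂ v₂
      = k * betaFn (a + 1) 2 * (2 / (a + 4) + 1 / (a + 3)) * betaFn (a + 1) (a + 5)
        * T ^ (2 * a + 6) / (2 * a + 6) := by
  rw [integral_congr fun u₁ hu₁ => integral_simplexIntegrand_v₁ ha ((uIcc_of_le hT ▸ hu₁).2),
    integral_const_mul, integral_sub_rpow (by linarith)]
  ring_nf

end simplexIntegrand

theorem integral_simplex_I3_general (H T : ℝ) (hH : 1 / 2 < H) (hT : 0 < T) :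
    (∫ u₁ in (0 : ℝ)..T, ∫ v₁ in u₁..T, ∫ u₂ in v₁..T, ∫ v₂ in u₂..T,
        4 * (H * (2 * H - 1)) ^ 2 * (v₁ - u₁) ^ (2 * H - 2) * (v₂ - u₂) ^ (2 * H - 2) *
          (2 * (T - u₂) * (T - v₂) + (T - v₁) * (T - v₂)))
      = (6 * H + 4) / (2 * H + 1) * betaFn (2 * H + 1) (2 * H + 2) * T ^ (4 * H + 2) := by
  have hx : 0 < 2 * H - 1 := by linarith
  have hy : 0 < 2 * H + 1 := by linarith
  refine (integral_simplexIntegrand (k := 4 * (H * (2 * H - 1)) ^ 2)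
    (show -1 < 2 * H - 2 by linarith) hT.le).trans ?_
  rw [show 2 * H - 2 + 1 = 2 * H - 1 by ring, show 2 * H - 2 + 5 = 2 * H + 1 + 2 by ring,
    show 2 * (2 * H - 2) + 6 = 4 * H + 2 by ring, show 2 * H - 2 + 4 = 2 * H + 2 by ring,
    show 2 * H - 2 + 3 = 2 * H + 1 by ring, betaFn_eq_beta hx two_pos,
    betaFn_eq_beta hx (by linarith), betaFn_eq_beta (by linarith) (by linarith), beta_two hx,
    beta_add_two hx hy, show 2 * H - 1 + 2 = 2 * H + 1 by ring,
    show 2 * H + 1 + 1 = 2 * H + 2 by ring]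
  field_simp
  rw [div_eq_iff (by linarith)]
  ring

/-- For `1/2 < H < 1` and `T > 0`, the iterated integral over
the simplex `{0 ≤ u₁ ≤ v₁ ≤ u₂ ≤ v₂ ≤ T}` of
`4(H(2H-1))² (v₁-u₁)^(2H-2)(v₂-u₂)^(2H-2) [2(T-u₂)(T-v₂) + (T-v₁)(T-v₂)]`
equals `((6H+4)/(2H+1)) ℬ(2H+1,2H+2) T^(4H+2)`. -/
theorem integral_simplex_I3 (H T : ℝ) (hH : 1 / 2 < H) (hH1 : H < 1) (hT : 0 < T) :
    (∫ u₁ in (0 : ℝ)..T, ∫ v₁ in u₁..T, ∫ u₂ in v₁..T, ∫ v₂ in u₂..T,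
        4 * (H * (2 * H - 1)) ^ 2 * (v₁ - u₁) ^ (2 * H - 2) * (v₂ - u₂) ^ (2 * H - 2) *
          (2 * (T - u₂) * (T - v₂) + (T - v₁) * (T - v₂)))
      = (6 * H + 4) / (2 * H + 1) * betaFn (2 * H + 1) (2 * H + 2) * T ^ (4 * H + 2) :=
  integral_simplex_I3_general H T hH hT
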